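/- arXiv:cs/0605132 — 2 statements merged into one kernel-verified Lean document; each statement's English description precedes it below -/
import Mathlib

section
/- The one-element partition P = {N} is D_c-stable if and only if the game (v, N) is superadditive. Moreover, if (v, N) is strictly superadditive, then {N} is the unique D_c-stable partition of N. -/
/-! Superadditivity extends by induction to `sw(C) ≤ v(⋃ C)` for every nonempty collection `C`,
and since `C[{N}] = {⋃ C}` this is exactly the `D_c`-stability of `{N}`; pairs `{A, B}` give the
converse. Under strict superadditivity a partition `P` with at least two blocks has
`sw(P) < v(N)`, whereas testing the `D_c`-stability of `P` on the collection `{N}`, whose frame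
in `P` is `P` itself, gives `sw(P) ≥ v(N)`. -/

open Finset

variable {α : Type*} [DecidableEq α] [Fintype α]

/-- A collection: a family of pairwise disjoint nonempty coalitions of `N`. -/
def IsCollection (C : Finset (Finset α)) : Prop :=
  (∀ S ∈ C, S ≠ ∅) ∧ (C : Set (Finset α)).PairwiseDisjoint id

/-- A partition of the set `S`: pairwise disjoint nonempty subsets whose union is `S`. -/
def IsPartitionOf (S : Finset α) (C : Finset (Finset α)) : Prop :=
  IsCollection C ∧ C.sup id = S

/-- A partition of the grand coalition `N` (= `Finset.univ`). -/
def IsPartition (P : Finset (Finset α)) : Prop :=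
  IsPartitionOf Finset.univ P

/-- The social welfare of a collection. -/
def sw (v : Finset α → ℝ) (C : Finset (Finset α)) : ℝ := ∑ S ∈ C, v S

/-- The collection `C` in the frame of the partition `P`:
`C[P] = {P₁ ∩ U, …, P_k ∩ U} \ {∅}` where `U` is the union of `C`. -/
def frame (C P : Finset (Finset α)) : Finset (Finset α) :=
  (P.image (fun Pi => Pi ∩ C.sup id)).erase ∅

/-- `P` is `D_c`-stable: `sw(C[P]) ≥ sw(C)` for every collection `C` in `N`. -/
def DcStable (v : Finset α → ℝ) (P : Finset (Finset α)) : Prop :=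
  ∀ C : Finset (Finset α), IsCollection C → sw v (frame C P) ≥ sw v C

/-- `P` is `D_p`-stable: `sw(P) ≥ sw(Q)` for every partition `Q` of `N`. -/
def DpStable (v : Finset α → ℝ) (P : Finset (Finset α)) : Prop :=
  ∀ Q : Finset (Finset α), IsPartition Q → sw v P ≥ sw v Q

/-- `Q` is `P`-homogeneous: every `Q_j` is contained in some `P_i` or contains some `P_i`. -/
def Homogeneous (P Q : Finset (Finset α)) : Prop :=
  ∀ Qj ∈ Q, ∃ Pi ∈ P, Qj ⊆ Pi ∨ Pi ⊆ Qj

/-- `P` is `D_hp`-stable: `sw(P) ≥ sw(Q)` for every `P`-homogeneous partition `Q` of `N`. -/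
def DhpStable (v : Finset α → ℝ) (P : Finset (Finset α)) : Prop :=
  ∀ Q : Finset (Finset α), IsPartition Q → Homogeneous P Q → sw v P ≥ sw v Q

/-- `P` is strictly `D_c`-stable: `sw(C[P]) > sw(C)` for every collection `C`
that is not a subset of `P`. -/
def StrictlyDcStable (v : Finset α → ℝ) (P : Finset (Finset α)) : Prop :=
  ∀ C : Finset (Finset α), IsCollection C → ¬ C ⊆ P → sw v (frame C P) > sw v C

/-- `P` is strictly `D_p`-stable. -/
def StrictlyDpStable (v : Finset α → ℝ) (P : Finset (Finset α)) : Prop :=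
  ∀ Q : Finset (Finset α), IsPartition Q → Q ≠ P → sw v P > sw v Q

/-- `P` is strictly `D_hp`-stable. -/
def StrictlyDhpStable (v : Finset α → ℝ) (P : Finset (Finset α)) : Prop :=
  ∀ Q : Finset (Finset α), IsPartition Q → Homogeneous P Q → Q ≠ P → sw v P > sw v Q

/-- The merge rule: distinct coalitions `T₁, …, T_k` (`k ≥ 2`) of `P` with
`∑ v(T_j) < v(∪ T_j)` are replaced by their union. -/
def MergeStep (v : Finset α → ℝ) (P P' : Finset (Finset α)) : Prop :=
  ∃ T : Finset (Finset α), T ⊆ P ∧ 2 ≤ T.card ∧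
    ∑ S ∈ T, v S < v (T.sup id) ∧ P' = insert (T.sup id) (P \ T)

/-- The split rule: a coalition `T` of `P` admitting a partition `{T₁, …, T_k}` (`k ≥ 2`)
with `v(T) < ∑ v(T_j)` is replaced by the coalitions `T₁, …, T_k`. -/
def SplitStep (v : Finset α → ℝ) (P P' : Finset (Finset α)) : Prop :=
  ∃ T ∈ P, ∃ D : Finset (Finset α), IsPartitionOf T D ∧ 2 ≤ D.card ∧
    v T < ∑ S ∈ D, v S ∧ P' = (P.erase T) ∪ D

section Collections

omit [DecidableEq α] [Fintype α]

variable {C D : Finset (Finset α)}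

theorem IsCollection.subset (hC : IsCollection C) (hD : D ⊆ C) : IsCollection D :=
  ⟨fun T hT => hC.1 T (hD hT), hC.2.subset (coe_subset.2 hD)⟩

theorem isCollection_singleton {S : Finset α} (hS : S ≠ ∅) : IsCollection {S} :=
  ⟨fun _ hT => mem_singleton.1 hT ▸ hS, by simp⟩

end Collections

section Superadditivity

omit [Fintype α]

theorem IsCollection.sup_ne_empty {C : Finset (Finset α)} (hC : IsCollection C)
    (hne : C.Nonempty) : C.sup id ≠ ∅ := by
  obtain ⟨T, hT⟩ := hne
  exact fun h => hC.1 T hT (subset_empty.1 (h ▸ le_sup (f := id) hT))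

theorem IsCollection.disjoint_sup_of_insert {C : Finset (Finset α)} {S : Finset α}
    (hC : IsCollection (insert S C)) (hS : S ∉ C) : Disjoint S (C.sup id) :=
  Finset.disjoint_sup_right.2 fun _ hT =>
    hC.2 (mem_insert_self S C) (mem_insert_of_mem hT) (ne_of_mem_of_not_mem hT hS).symm

theorem isCollection_pair {A B : Finset α} (hA : A ≠ ∅) (hB : B ≠ ∅) (hAB : Disjoint A B) :
    IsCollection {A, B} := by
  refine ⟨by simp [hA, hB], ?_⟩
  rw [coe_pair]
  exact Set.pairwise_pair.2 fun _ => ⟨hAB, hAB.symm⟩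

def Superadditive (v : Finset α → ℝ) : Prop :=
  ∀ A B : Finset α, A ≠ ∅ → B ≠ ∅ → Disjoint A B → v A + v B ≤ v (A ∪ B)

def StrictlySuperadditive (v : Finset α → ℝ) : Prop :=
  ∀ A B : Finset α, A ≠ ∅ → B ≠ ∅ → Disjoint A B → v A + v B < v (A ∪ B)

theorem StrictlySuperadditive.superadditive {v : Finset α → ℝ} (hv : StrictlySuperadditive v) :
    Superadditive v :=
  fun A B hA hB hAB => (hv A B hA hB hAB).le

variable {v : Finset α → ℝ} {C : Finset (Finset α)}

theorem Superadditive.sw_le_sup (hv : Superadditive v) (hC : IsCollection C)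
    (hne : C.Nonempty) : sw v C ≤ v (C.sup id) := by
  induction hne using Finset.Nonempty.cons_induction with
  | singleton S => simp [sw]
  | cons S C hS hne ih =>
    rw [cons_eq_insert] at hC ⊢
    have hC' := hC.subset (subset_insert S C)
    calc sw v (insert S C) = v S + sw v C := sum_insert hS
      _ ≤ v S + v (C.sup id) := by grw [ih hC']
      _ ≤ v (S ∪ C.sup id) := hv _ _ (hC.1 S (mem_insert_self S C)) (hC'.sup_ne_empty hne)
          (hC.disjoint_sup_of_insert hS)
      _ = v ((insert S C).sup id) := by rw [sup_insert]; rfl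

theorem StrictlySuperadditive.sw_lt_sup (hv : StrictlySuperadditive v) (hC : IsCollection C)
    (hcard : 2 ≤ C.card) : sw v C < v (C.sup id) := by
  obtain ⟨S, hS⟩ := card_pos.1 (by omega : 0 < C.card)
  have hne : (C.erase S).Nonempty := card_pos.1 (by rw [card_erase_of_mem hS]; omega)
  rw [← insert_erase hS] at hC ⊢
  have hC' := hC.subset (subset_insert S (C.erase S))
  calc sw v (insert S (C.erase S)) = v S + sw v (C.erase S) := sum_insert (notMem_erase S C)
    _ ≤ v S + v ((C.erase S).sup id) := by grw [hv.superadditive.sw_le_sup hC' hne]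
    _ < v (S ∪ (C.erase S).sup id) :=
      hv _ _ (hC.1 S (mem_insert_self S _)) (hC'.sup_ne_empty hne)
        (hC.disjoint_sup_of_insert (notMem_erase S C))
    _ = v ((insert S (C.erase S)).sup id) := by rw [sup_insert]; rfl

end Superadditivity

theorem IsCollection.frame_singleton_univ {C : Finset (Finset α)} (hC : IsCollection C)
    (hne : C.Nonempty) : frame C {univ} = {C.sup id} := by
  simp [frame, (hC.sup_ne_empty hne).symm]

theorem frame_eq_self_of_sup_eq_univ {C P : Finset (Finset α)} (hP : ∅ ∉ P)
    (hC : C.sup id = univ) : frame C P = P := by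
  simp [frame, hC, erase_eq_of_notMem hP]

variable {v : Finset α → ℝ}

theorem Superadditive.dcStable_singleton_univ (hv : Superadditive v) : DcStable v {univ} := by
  intro C hC
  rcases C.eq_empty_or_nonempty with rfl | hne
  · simp [frame, sw]
  · simpa [hC.frame_singleton_univ hne, sw] using hv.sw_le_sup hC hne

theorem DcStable.superadditive (h : DcStable v {univ}) : Superadditive v := by
  intro A B hA hB hAB
  have hAB_ne : A ≠ B := fun h => hA (disjoint_self.1 (h ▸ hAB))
  have hpair := isCollection_pair hA hB hAB
  simpa [hpair.frame_singleton_univ (insert_nonempty A {B}), sw, sum_pair hAB_ne] using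
    h {A, B} hpair

theorem StrictlySuperadditive.eq_singleton_univ_of_dcStable [Nonempty α]
    (hv : StrictlySuperadditive v) {P : Finset (Finset α)} (hP : IsPartition P)
    (hDc : DcStable v P) : P = {univ} := by
  have hPne : P.Nonempty := nonempty_iff_ne_empty.2 fun h =>
    univ_nonempty.ne_empty (by simpa [h] using hP.2.symm)
  have hcard : P.card < 2 := by
    by_contra! hcard
    have hge := hDc {univ} (isCollection_singleton univ_nonempty.ne_empty)
    rw [frame_eq_self_of_sup_eq_univ (fun h => hP.1.1 ∅ h rfl) (by simp)] at hge
    have hlt := hv.sw_lt_sup hP.1 hcard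
    rw [hP.2] at hlt
    simp only [sw, sum_singleton, ge_iff_le] at hge hlt
    linarith
  obtain ⟨T, rfl⟩ := card_eq_one.1 (show P.card = 1 by have := hPne.card_pos; omega)
  simpa using hP.2

theorem grand_coalition_Dc_stable_general [Nonempty α] (v : Finset α → ℝ) :
    (DcStable v ({Finset.univ} : Finset (Finset α)) ↔
      ∀ A B : Finset α, A ≠ ∅ → B ≠ ∅ → Disjoint A B → v A + v B ≤ v (A ∪ B)) ∧
    ((∀ A B : Finset α, A ≠ ∅ → B ≠ ∅ → Disjoint A B → v A + v B < v (A ∪ B)) →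
      DcStable v ({Finset.univ} : Finset (Finset α)) ∧
      ∀ P : Finset (Finset α), IsPartition P → DcStable v P →
        P = ({Finset.univ} : Finset (Finset α))) := by
  refine ⟨⟨DcStable.superadditive, Superadditive.dcStable_singleton_univ⟩, fun hv => ?_⟩
  change StrictlySuperadditive v at hv
  exact ⟨hv.superadditive.dcStable_singleton_univ,
    fun _ hP hDc => hv.eq_singleton_univ_of_dcStable hP hDc⟩

/-- Corollary: `{N}` is `D_c`-stable iff the game is superadditive; if the game is
strictly superadditive, then `{N}` is the unique `D_c`-stable partition. -/
theorem grand_coalition_Dc_stable [Nonempty α] (v : Finset α → ℝ) (hv : v ∅ = 0) :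
    (DcStable v ({Finset.univ} : Finset (Finset α)) ↔
      ∀ A B : Finset α, A ≠ ∅ → B ≠ ∅ → Disjoint A B → v A + v B ≤ v (A ∪ B)) ∧
    ((∀ A B : Finset α, A ≠ ∅ → B ≠ ∅ → Disjoint A B → v A + v B < v (A ∪ B)) →
      DcStable v ({Finset.univ} : Finset (Finset α)) ∧
      ∀ P : Finset (Finset α), IsPartition P → DcStable v P →
        P = ({Finset.univ} : Finset (Finset α))) :=
  grand_coalition_Dc_stable_general v
end

section
/- Suppose P is a strictly D_c-stable partition of N. Then P is the outcome of every iteration of the merge and split rules: every sequence of applications of the merge and split rules starting from an arbitrary partition of N terminates, and its final partition (to which neither rule can be applied) equals P. -/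
open Finset

variable {α : Type*} [DecidableEq α] [Fintype α]

/-! Each application of the merge or split rule strictly increases the social welfare, so no
partition recurs along an iteration; as there are only finitely many partitions, every iteration
terminates. If a terminal partition `Q` differed from `P`, some coalition `T ∈ Q` would not be a
coalition of `P`, and strict `D_c`-stability applied to the collection `{T}` says that cutting
`T` along `P` into the nonempty pieces `T ∩ Pᵢ` strictly increases welfare: the split rule would
still apply to `Q`. -/

section Steps

-- Rebinding `α` drops the ambient `[Fintype α]`, which the lemmas of this section do not need.
variable {α : Type*} [DecidableEq α] {v : Finset α → ℝ} {S : Finset α}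
  {P P' : Finset (Finset α)}

namespace IsCollection

lemma sup_ne_empty_s15 (hP : IsCollection P) {T : Finset (Finset α)} (hTP : T ⊆ P)
    (hT : T.Nonempty) : T.sup id ≠ ∅ := by
  obtain ⟨R, hR⟩ := hT
  exact fun h => hP.1 R (hTP hR) (subset_empty.mp (h ▸ le_sup (f := id) hR))

lemma disjoint_sup_of_mem_sdiff (hP : IsCollection P) {T : Finset (Finset α)} (hTP : T ⊆ P)
    {R : Finset α} (hR : R ∈ P \ T) : Disjoint (T.sup id) R := by
  rw [mem_sdiff] at hR
  exact Finset.disjoint_sup_left.mpr fun R' hR' =>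
    hP.2 (hTP hR') hR.1 (ne_of_mem_of_not_mem hR' hR.2)

lemma disjoint_of_mem_erase (hP : IsCollection P) {T R R' : Finset α} (hT : T ∈ P)
    (hR : R ∈ P.erase T) (hR' : R' ⊆ T) : Disjoint R R' :=
  (hP.2 (mem_of_mem_erase hR) hT (ne_of_mem_erase hR)).mono_right hR'

end IsCollection

lemma MergeStep.sw_lt (hP : IsCollection P) (h : MergeStep v P P') : sw v P < sw v P' := by
  obtain ⟨T, hTP, hcard, hlt, rfl⟩ := h
  have hT : T.Nonempty := card_pos.mp (by omega)
  have hnew : T.sup id ∉ P \ T := fun hmem =>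
    hP.sup_ne_empty_s15 hTP hT (disjoint_self.mp (hP.disjoint_sup_of_mem_sdiff hTP hmem))
  have hsplit : ∑ R ∈ P \ T, v R + ∑ R ∈ T, v R = ∑ R ∈ P, v R := sum_sdiff hTP
  rw [sw, sw, sum_insert hnew]
  linarith

lemma SplitStep.sw_lt (hP : IsCollection P) (h : SplitStep v P P') : sw v P < sw v P' := by
  obtain ⟨T, hT, D, hD, -, hlt, rfl⟩ := h
  have hdisj : Disjoint (P.erase T) D := disjoint_left.mpr fun R hRP hRD =>
    hD.1.1 R hRD (disjoint_self.mp
      (hP.disjoint_of_mem_erase hT hRP (hD.2 ▸ le_sup (f := id) hRD)))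
  have herase : ∑ R ∈ P.erase T, v R + v T = ∑ R ∈ P, v R := sum_erase_add P v hT
  rw [sw, sw, sum_union hdisj]
  linarith

namespace IsPartitionOf

lemma mergeStep (hP : IsPartitionOf S P) (h : MergeStep v P P') : IsPartitionOf S P' := by
  obtain ⟨T, hTP, hcard, -, rfl⟩ := h
  have hT : T.Nonempty := card_pos.mp (by omega)
  refine ⟨⟨?_, ?_⟩, ?_⟩
  · simp only [mem_insert, forall_eq_or_imp]
    exact ⟨hP.1.sup_ne_empty_s15 hTP hT, fun R hR => hP.1.1 R (mem_sdiff.mp hR).1⟩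
  · rw [coe_insert]
    exact (hP.1.2.subset (by simp)).insert fun R hR _ =>
      hP.1.disjoint_sup_of_mem_sdiff hTP hR
  · rw [sup_insert, id, ← sup_union, union_sdiff_of_subset hTP, hP.2]

lemma splitStep (hP : IsPartitionOf S P) (h : SplitStep v P P') : IsPartitionOf S P' := by
  obtain ⟨T, hT, D, hD, -, -, rfl⟩ := h
  refine ⟨⟨?_, ?_⟩, ?_⟩
  · simp only [mem_union]
    rintro R (hR | hR)
    exacts [hP.1.1 R (mem_of_mem_erase hR), hD.1.1 R hR]
  · rw [coe_union, Set.pairwiseDisjoint_union]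
    exact ⟨hP.1.2.subset (by simp), hD.1.2, fun R hR R' hR' _ =>
      hP.1.disjoint_of_mem_erase hT hR (hD.2 ▸ le_sup (f := id) hR')⟩
  · have hcover : T ⊔ (P.erase T).sup id = S := by
      rw [← hP.2, ← insert_erase hT, sup_insert, erase_insert (notMem_erase T P)]; rfl
    rw [sup_union, hD.2, sup_comm, hcover]

lemma reflTransGen (hP : IsPartitionOf S P)
    (h : Relation.ReflTransGen (fun a b => MergeStep v a b ∨ SplitStep v a b) P P') :
    IsPartitionOf S P' := by
  induction h with
  | refl => exact hP
  | tail _ hstep ih => exact hstep.elim ih.mergeStep ih.splitStep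

lemma two_le_card {T : Finset α} {D : Finset (Finset α)}
    (hD : IsPartitionOf T D) (hT : T ≠ ∅) (hDT : D ≠ {T}) : 2 ≤ D.card := by
  by_contra! hcard
  obtain ⟨R, hDR⟩ := card_le_one_iff_subset_singleton.mp (Nat.le_of_lt_succ hcard)
  rcases subset_singleton_iff.mp hDR with rfl | rfl
  · exact hT (by simpa using hD.2.symm)
  · exact hDT (by simpa using hD.2)

lemma eq_of_subset {Q : Finset (Finset α)} (hP : IsPartitionOf S P) (hQ : IsPartitionOf S Q)
    (hQP : Q ⊆ P) : Q = P := by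
  refine hQP.antisymm fun R hR => ?_
  obtain ⟨a, ha⟩ := nonempty_iff_ne_empty.mpr (hP.1.1 R hR)
  have haS : a ∈ Q.sup id := hQ.2 ▸ hP.2 ▸ mem_sup.mpr ⟨R, hR, ha⟩
  obtain ⟨R', hR', haR'⟩ := mem_sup.mp haS
  by_contra hRQ
  exact disjoint_left.mp (hP.1.2 (hQP hR') hR (ne_of_mem_of_not_mem hR' hRQ)) haR' ha

end IsPartitionOf

end Steps

lemma isPartitionOf_frame {P : Finset (Finset α)} (hP : IsPartition P)
    (C : Finset (Finset α)) : IsPartitionOf (C.sup id) (frame C P) := by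
  refine ⟨⟨fun R hR => ne_of_mem_erase hR, fun R hR R' hR' hne => ?_⟩, ?_⟩
  · obtain ⟨Pi, hPi, rfl⟩ := mem_image.mp (mem_of_mem_erase hR)
    obtain ⟨Pj, hPj, rfl⟩ := mem_image.mp (mem_of_mem_erase hR')
    exact (hP.1.2 hPi hPj fun h => hne (h ▸ rfl)).mono inter_subset_left inter_subset_left
  · rw [frame, ← bot_eq_empty, sup_erase_bot, sup_image]
    exact (sup_inf_distrib_right P id _).symm.trans (by simp [hP.2])

lemma StrictlyDcStable.exists_splitStep {v : Finset α → ℝ} {P Q : Finset (Finset α)}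
    (hP : IsPartition P) (hstrict : StrictlyDcStable v P) (hQ : IsCollection Q)
    (hQP : ¬ Q ⊆ P) : ∃ Q', SplitStep v Q Q' := by
  obtain ⟨T, hTQ, hTP⟩ := not_subset.mp hQP
  have hT : IsCollection {T} := ⟨by simpa using hQ.1 T hTQ, by simp⟩
  have hgain : v T < sw v (frame {T} P) := by
    simpa [sw] using hstrict {T} hT (by simpa using hTP)
  have hD : IsPartitionOf T (frame {T} P) := by simpa using isPartitionOf_frame hP {T}
  refine ⟨_, T, hTQ, _, hD, hD.two_le_card (hQ.1 T hTQ) fun hDT => ?_, hgain, rfl⟩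
  simp [hDT, sw] at hgain

theorem strictly_Dc_stable_outcome_general (v : Finset α → ℝ)
    (P : Finset (Finset α)) (hP : IsPartition P) (hstrict : StrictlyDcStable v P) :
    (¬ ∃ f : ℕ → Finset (Finset α), (∀ n, IsPartition (f n)) ∧
        ∀ n, MergeStep v (f n) (f (n + 1)) ∨ SplitStep v (f n) (f (n + 1))) ∧
    (∀ Q Q' : Finset (Finset α), IsPartition Q →
      Relation.ReflTransGen (fun a b => MergeStep v a b ∨ SplitStep v a b) Q Q' →
      (¬ ∃ R : Finset (Finset α), MergeStep v Q' R) →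
      (¬ ∃ R : Finset (Finset α), SplitStep v Q' R) →
      Q' = P) := by
  refine ⟨?_, fun Q Q' hQ hQQ' _ hsplit => ?_⟩
  · rintro ⟨f, hf, hstep⟩
    have hmono : StrictMono (sw v ∘ f) := strictMono_nat_of_lt_succ fun n =>
      (hstep n).elim (·.sw_lt (hf n).1) (·.sw_lt (hf n).1)
    exact not_injective_infinite_finite f hmono.injective.of_comp
  · have hQ' : IsPartition Q' := IsPartitionOf.reflTransGen hQ hQQ'
    by_contra hne
    exact hsplit (hstrict.exists_splitStep hP hQ'.1
      fun hQ'P => hne (IsPartitionOf.eq_of_subset hP hQ' hQ'P))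

/-- Theorem 9(i): a strictly `D_c`-stable partition is the outcome of every iteration
of the merge and split rules: every such iteration terminates, and every terminal
partition reachable from an arbitrary initial partition equals `P`. -/
theorem strictly_Dc_stable_outcome [Nonempty α] (v : Finset α → ℝ) (hv : v ∅ = 0)
    (P : Finset (Finset α)) (hP : IsPartition P) (hstrict : StrictlyDcStable v P) :
    (¬ ∃ f : ℕ → Finset (Finset α), (∀ n, IsPartition (f n)) ∧
        ∀ n, MergeStep v (f n) (f (n + 1)) ∨ SplitStep v (f n) (f (n + 1))) ∧
    (∀ Q Q' : Finset (Finset α), IsPartition Q →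
      Relation.ReflTransGen (fun a b => MergeStep v a b ∨ SplitStep v a b) Q Q' →
      (¬ ∃ R : Finset (Finset α), MergeStep v Q' R) →
      (¬ ∃ R : Finset (Finset α), SplitStep v Q' R) →
      Q' = P) :=
  strictly_Dc_stable_outcome_general v P hP hstrict
end
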